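/- Let 2 ≤ g₁ < g₂ < … < g_e be coprime positive integers forming a minimal generating system of the numerical semigroup S = ⟨g₁,…,g_e⟩, let F be its Frobenius number, n = |S ∩ [0, F]|, and let t = |PF(S)| be the type of S. Then t ≤ (e − 2)·n + 2. -/
import Mathlib

/-- **Theorem 3 (bound on the type).**
Let `2 ≤ g₁ < g₂ < … < g_e` be coprime positive integers forming a minimal generating
system of the numerical semigroup `S = ⟨g₁,…,g_e⟩`, let `F = max (ℤ \ S)` be the
Frobenius number, `n = |S ∩ [0, F]|`, and let `t = |PF(S)|` be the type of `S`, where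
`PF(S) = {x ∈ ℤ \ S : x + s ∈ S for every s ∈ S \ {0}}`.  Then `t ≤ (e − 2)·n + 2`. -/
theorem type_bound
    (e : ℕ) (he : 2 ≤ e) (g : Fin e → ℤ)
    (hg2 : 2 ≤ g ⟨0, by omega⟩)
    (hmono : StrictMono g)
    (hcop : Finset.univ.gcd g = 1)
    (S : Set ℤ)
    (hS : S = {x : ℤ | ∃ a : Fin e → ℕ, x = ∑ i, (a i : ℤ) * g i})
    (hmingen : ∀ i : Fin e, ¬∃ a : Fin e → ℕ, a i = 0 ∧ g i = ∑ j, (a j : ℤ) * g j)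
    (F : ℤ) (hF : F ∉ S) (hFmax : ∀ x : ℤ, x ∉ S → x ≤ F)
    (n : ℕ) (hn : n = (S ∩ Set.Icc 0 F).ncard)
    (PF : Set ℤ) (hPF : PF = {x : ℤ | x ∉ S ∧ ∀ s ∈ S, s ≠ 0 → x + s ∈ S})
    (t : ℕ) (ht : t = PF.ncard) :
    (t : ℤ) ≤ ((e : ℤ) - 2) * (n : ℤ) + 2 := by
  classical
  set i0 : Fin e := ⟨0, by omega⟩ with hi0
  set L : Fin e := ⟨e - 1, by omega⟩ with hLdef
  set m : ℤ := g i0 with hmdef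
  have hi0L : i0 ≠ L := by
    simp only [hi0, hLdef, Fin.mk.injEq, ne_eq]
    omega
  have hgpos : ∀ i : Fin e, 0 < g i := by
    intro i
    have h1 : g i0 ≤ g i := hmono.monotone (by simp [hi0, Fin.le_def])
    omega
  have hSnonneg : ∀ x ∈ S, 0 ≤ x := by
    intro x hx
    rw [hS] at hx
    obtain ⟨a, rfl⟩ := hx
    exact Finset.sum_nonneg fun i _ => mul_nonneg (by positivity) (hgpos i).le
  have hsingle : ∀ (i : Fin e) (k : ℕ), ((k : ℤ) * g i) ∈ S := by
    intro i k
    rw [hS]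
    exact ⟨fun j => if j = i then k else 0, by simp [Finset.sum_ite_eq']⟩
  have hmS : m ∈ S := by simpa using hsingle i0 1
  have hmne : m ≠ 0 := by have := hg2; omega
  -- splitting one generator off a representation
  have hupdate : ∀ (a : Fin e → ℕ) (i : Fin e), 1 ≤ a i →
      (∑ j, (a j : ℤ) * g j)
        = g i + ∑ j, ((Function.update a i (a i - 1) j : ℕ) : ℤ) * g j := by
    intro a i hi
    rw [← Finset.add_sum_erase _ _ (Finset.mem_univ i),
        ← Finset.add_sum_erase _ (fun j => ((Function.update a i (a i - 1) j : ℕ) : ℤ) * g j)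
          (Finset.mem_univ i)]
    have h1 : ∀ j ∈ Finset.univ.erase i,
        ((Function.update a i (a i - 1) j : ℕ) : ℤ) * g j = (a j : ℤ) * g j := by
      intro j hj
      rw [Function.update_of_ne (Finset.ne_of_mem_erase hj)]
    rw [Finset.sum_congr rfl h1]
    simp only [Function.update_self]
    have h2 : ((a i - 1 : ℕ) : ℤ) = (a i : ℤ) - 1 := by omega
    rw [h2]; ring
  -- every PF element has a representation of f + m avoiding g₀
  have hrep0 : ∀ f ∈ PF, ∃ a : Fin e → ℕ,
      f + m = ∑ j, (a j : ℤ) * g j ∧ a i0 = 0 := by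
    intro f hf
    rw [hPF] at hf
    obtain ⟨hfS, hfadd⟩ := hf
    have hfm : f + m ∈ S := hfadd m hmS hmne
    rw [hS] at hfm
    obtain ⟨a, ha⟩ := hfm
    refine ⟨a, ha, ?_⟩
    by_contra h0
    have h1 : 1 ≤ a i0 := by omega
    have h2 := hupdate a i0 h1
    rw [h2] at ha
    have : f = ∑ j, ((Function.update a i0 (a i0 - 1) j : ℕ) : ℤ) * g j := by
      rw [← hmdef] at ha; linarith
    exact hfS (by rw [hS]; exact ⟨_, this⟩)
  -- the finite set of normal elements
  have hNfin : (S ∩ Set.Icc 0 F).Finite :=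
    (Set.finite_Icc 0 F).subset Set.inter_subset_right
  set Nf : Finset ℤ := hNfin.toFinset with hNf
  have hNcard : Nf.card = n := by
    rw [hn, Set.ncard_eq_toFinset_card _ hNfin]
  set Ifin : Finset (Fin e) := Finset.univ \ {i0, L} with hIfin
  have hIcard : Ifin.card = e - 2 := by
    rw [hIfin, Finset.card_sdiff_of_subset (Finset.subset_univ _)]
    rw [Finset.card_insert_of_notMem (by simpa using hi0L), Finset.card_singleton]
    simp
  set U : Finset ℤ := Ifin.biUnion (fun i => Nf.image (fun x => x + (g i - m))) with hU
  have hUcard : U.card ≤ (e - 2) * n := by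
    calc U.card ≤ ∑ i ∈ Ifin, (Nf.image (fun x => x + (g i - m))).card :=
          Finset.card_biUnion_le
      _ ≤ ∑ _i ∈ Ifin, Nf.card :=
          Finset.sum_le_sum fun i _ => Finset.card_image_le
      _ = (e - 2) * n := by rw [Finset.sum_const, smul_eq_mul, hIcard, hNcard]
  set Bels : Set ℤ := {x : ℤ | ∃ k : ℕ, x + m = (k : ℤ) * g L} with hBels
  -- every PF element is in Bels or in U
  have hsplit : ∀ f ∈ PF, f ∈ Bels ∨ f ∈ (U : Set ℤ) := by
    intro f hf
    obtain ⟨a, ha, ha0⟩ := hrep0 f hf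
    by_cases hA : ∃ i ∈ Ifin, 1 ≤ a i
    · right
      obtain ⟨i, hiI, hai⟩ := hA
      have h2 := hupdate a i hai
      rw [h2] at ha
      set x : ℤ := ∑ j, ((Function.update a i (a i - 1) j : ℕ) : ℤ) * g j with hx
      have hxS : x ∈ S := by rw [hS]; exact ⟨_, rfl⟩
      have hxnn : 0 ≤ x := hSnonneg x hxS
      have higi : m < g i := by
        have hne : i ≠ i0 := by
          intro hcon; rw [hIfin] at hiI; simp [hcon] at hiI
        have hle : i0 ≤ i := by simp [hi0, Fin.le_def]
        exact hmono (lt_of_le_of_ne hle (Ne.symm hne))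
      have hfF : f ≤ F := by
        rw [hPF] at hf
        exact hFmax f hf.1
      have hxF : x ≤ F := by linarith
      have hxN : x ∈ Nf := by
        rw [hNf, Set.Finite.mem_toFinset]
        exact ⟨hxS, hxnn, hxF⟩
      rw [hU]
      simp only [Finset.coe_biUnion, Set.mem_iUnion, Finset.mem_coe]
      refine ⟨i, hiI, ?_⟩
      rw [Finset.mem_image]
      exact ⟨x, hxN, by linarith⟩
    · left
      push_neg at hA
      rw [hBels]
      refine ⟨a L, ?_⟩
      rw [ha]
      apply Finset.sum_eq_single
      · intro j _ hj
        have hj0 : a j = 0 := by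
          by_cases hji : j = i0
          · rw [hji]; exact ha0
          · have : j ∈ Ifin := by
              rw [hIfin]; simp [hji, hj]
            have := hA j this
            omega
        simp [hj0]
      · intro h; exact absurd (Finset.mem_univ L) h
  -- at most one PF element in Bels
  have hsub : (PF ∩ Bels).Subsingleton := by
    intro f hf f' hf'
    obtain ⟨hfPF, k, hk⟩ := hf
    obtain ⟨hf'PF, k', hk'⟩ := hf'
    rw [hPF] at hfPF hf'PF
    have hgL : 0 < g L := hgpos L
    rcases lt_trichotomy k k' with h | h | h
    · exfalso
      have hs : ((k' - k : ℕ) : ℤ) * g L ∈ S := hsingle L (k' - k)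
      have hsne : ((k' - k : ℕ) : ℤ) * g L ≠ 0 := by
        have : (1 : ℤ) ≤ ((k' - k : ℕ) : ℤ) := by omega
        nlinarith
      have := hfPF.2 _ hs hsne
      have hfeq : f + ((k' - k : ℕ) : ℤ) * g L = f' := by
        have hc : ((k' - k : ℕ) : ℤ) = (k' : ℤ) - k := by omega
        rw [hc]; linarith [hk, hk']
      rw [hfeq] at this
      exact hf'PF.1 this
    · have : (k : ℤ) * g L = (k' : ℤ) * g L := by rw [h]
      linarith [hk, hk']
    · exfalso
      have hs : ((k - k' : ℕ) : ℤ) * g L ∈ S := hsingle L (k - k')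
      have hsne : ((k - k' : ℕ) : ℤ) * g L ≠ 0 := by
        have : (1 : ℤ) ≤ ((k - k' : ℕ) : ℤ) := by omega
        nlinarith
      have := hf'PF.2 _ hs hsne
      have hfeq : f' + ((k - k' : ℕ) : ℤ) * g L = f := by
        have hc : ((k - k' : ℕ) : ℤ) = (k : ℤ) - k' := by omega
        rw [hc]; linarith [hk, hk']
      rw [hfeq] at this
      exact hfPF.1 this
  -- put it together
  have hPFsub : PF ⊆ (PF ∩ Bels) ∪ (U : Set ℤ) := by
    intro f hf
    rcases hsplit f hf with h | h
    · exact Or.inl ⟨hf, h⟩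
    · exact Or.inr h
  have hfin1 : (PF ∩ Bels).Finite := hsub.finite
  have hfin2 : ((U : Set ℤ)).Finite := U.finite_toSet
  have hbound : PF.ncard ≤ 1 + (e - 2) * n := by
    calc PF.ncard ≤ ((PF ∩ Bels) ∪ (U : Set ℤ)).ncard :=
          Set.ncard_le_ncard hPFsub (hfin1.union hfin2)
      _ ≤ (PF ∩ Bels).ncard + ((U : Set ℤ)).ncard := Set.ncard_union_le _ _
      _ ≤ 1 + (e - 2) * n := by
          have h1 : (PF ∩ Bels).ncard ≤ 1 := Set.ncard_le_one hfin1 |>.mpr ?_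
          · have h2 : ((U : Set ℤ)).ncard ≤ (e - 2) * n := by
              rw [Set.ncard_coe_finset]; exact hUcard
            omega
          · intro a ha b hb; exact hsub ha hb
  rw [ht]
  have hcast : ((e - 2 : ℕ) : ℤ) = (e : ℤ) - 2 := by omega
  have : (PF.ncard : ℤ) ≤ 1 + ((e - 2 : ℕ) : ℤ) * n := by exact_mod_cast hbound
  rw [hcast] at this
  linarith
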